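/- arXiv:1906.05839 — 4 statements merged into one kernel-verified Lean document; each statement's English description precedes it below -/
import Mathlib

section
/- For every integer n ≥ 3, the fractional local dimension of the standard example S_n satisfies fldim(S_n) < 3. -/
noncomputable section

/-- A partial linear extension (ple) of a poset, encoded as a list of distinct elements:
the list order is the linear order, and it must extend the poset order on its members. -/
def IsPLE (α : Type*) [PartialOrder α] [DecidableEq α] (l : List α) : Prop :=
  l.Nodup ∧ ∀ x ∈ l, ∀ y ∈ l, x < y → l.idxOf x < l.idxOf y

/-- `u ≤ v` in the ple `l`. -/
def pleLE {α : Type*} [DecidableEq α] (l : List α) (u v : α) : Prop :=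
  u ∈ l ∧ v ∈ l ∧ l.idxOf u ≤ l.idxOf v

/-- `u < v` in the ple `l`. -/
def pleLT {α : Type*} [DecidableEq α] (l : List α) (u v : α) : Prop :=
  u ∈ l ∧ v ∈ l ∧ l.idxOf u < l.idxOf v

/-- A local weight function: assigns to each ple of the poset a weight in [0,1]. -/
structure LocalWeight (α : Type*) [PartialOrder α] [DecidableEq α] where
  w : List α → ℝ
  nonneg : ∀ l, 0 ≤ w l
  le_one : ∀ l, w l ≤ 1
  supp : ∀ l, ¬ IsPLE α l → w l = 0

/-- local measure μ(u,w): total weight of ple's containing `u`. -/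
def localMeasure {α : Type*} [PartialOrder α] [DecidableEq α] (W : LocalWeight α) (u : α) : ℝ :=
  ∑ᶠ l ∈ {l : List α | IsPLE α l ∧ u ∈ l}, W.w l

/-- μ(P,w): the maximum local measure over elements of the poset. -/
def maxLocalMeasure {α : Type*} [PartialOrder α] [DecidableEq α] [Fintype α]
    (W : LocalWeight α) : ℝ :=
  ⨆ u : α, localMeasure W u

/-- A fractional local realizer. -/
def IsFLRealizer {α : Type*} [PartialOrder α] [DecidableEq α] (W : LocalWeight α) : Prop :=
  (∀ u v : α, u ≤ v →
    1 ≤ ∑ᶠ l ∈ {l : List α | IsPLE α l ∧ pleLE l u v}, W.w l) ∧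
  (∀ u v : α, ¬ u ≤ v → ¬ v ≤ u →
    1 ≤ ∑ᶠ l ∈ {l : List α | IsPLE α l ∧ pleLT l v u}, W.w l)

/-- The fractional local dimension of a finite poset. -/
def fldim (α : Type*) [PartialOrder α] [DecidableEq α] [Fintype α] : ℝ :=
  sInf {c : ℝ | ∃ W : LocalWeight α, IsFLRealizer W ∧ maxLocalMeasure W = c}

/-- The poset P(1,d;n): all 1-element and d-element subsets of {1,…,n}, ordered by inclusion. -/
abbrev PosetOneDN (d n : ℕ) := {S : Finset (Fin n) // S.card = 1 ∨ S.card = d}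

/-- fldim(1,d;n). -/
def fldim1dn (d n : ℕ) : ℝ := fldim (PosetOneDN d n)

end

/-- The standard example S_n: minimal elements a_i = inl i, maximal elements b_j = inr j,
with a_i < b_j iff i ≠ j. -/
def StdEx (n : ℕ) : Type := Sum (Fin n) (Fin n)

/-- The order relation of the standard example. -/
def StdEx.le {n : ℕ} : StdEx n → StdEx n → Prop
  | Sum.inl i, Sum.inl j => i = j
  | Sum.inl i, Sum.inr j => i ≠ j
  | Sum.inr i, Sum.inr j => i = j
  | Sum.inr _, Sum.inl _ => False

instance (n : ℕ) : PartialOrder (StdEx n) where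
  le := StdEx.le
  le_refl a := by cases a <;> simp [StdEx.le]
  le_trans a b c hab hbc := by
    cases a <;> cases b <;> cases c <;> simp_all [StdEx.le]
  le_antisymm a b hab hba := by
    cases a <;> cases b <;> simp_all [StdEx.le] <;> rfl

instance (n : ℕ) : Fintype (StdEx n) :=
  inferInstanceAs (Fintype (Sum (Fin n) (Fin n)))

instance (n : ℕ) : DecidableEq (StdEx n) :=
  inferInstanceAs (DecidableEq (Sum (Fin n) (Fin n)))

/-!
Let `q = 1 / (n - 1)`. Give weight `1 - q` to the linear extension
`a_{n-1} … a_0 b_{n-1} … b_0` and to each two-element ple `b_i a_i`, and weight `q` to each of the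
`n` linear extensions `a_0 … â_i … a_{n-1} b_i a_i b_0 … b̂_i … b_{n-1}`. Every element lies in
the first list, in exactly one two-element ple and in all `n` lists of the last kind, so its local
measure is `2 (1 - q) + n q = 3 - q < 3`. Every order relation that a realizer must see holds in
the first list together with one list of the last kind, in `b_i a_i` together with the `i`-th list
of the last kind, or in `n - 1` lists of the last kind; in each case the weights add up to `1`.
-/

open Finset

theorem List.idxOf_lt_idxOf_of_pairwise {α : Type*} [DecidableEq α] {R : α → α → Prop}
    {l : List α} (hl : l.Pairwise R) {x y : α} (hx : x ∈ l) (hy : y ∈ l) (hxy : R x y)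
    (hyx : ¬ R y x) : l.idxOf x < l.idxOf y := by
  have hx' := List.idxOf_lt_length_iff.2 hx
  have hy' := List.idxOf_lt_length_iff.2 hy
  rcases lt_trichotomy (l.idxOf x) (l.idxOf y) with h | h | h
  · exact h
  · have : x = y := by rw [← List.getElem_idxOf hx', ← List.getElem_idxOf hy']; simp only [h]
    exact absurd (this ▸ hxy) (this ▸ hyx)
  · have := List.pairwise_iff_getElem.1 hl _ _ hy' hx' h
    rw [List.getElem_idxOf, List.getElem_idxOf] at this
    exact absurd this hyx

section RankList

variable {α β : Type*} [LinearOrder β]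

noncomputable def rankList (r : α → β) (s : Finset α) : List α :=
  s.toList.mergeSort fun x y => decide (r x ≤ r y)

variable {r : α → β} {s : Finset α} {x y : α}

@[simp]
theorem mem_rankList : x ∈ rankList r s ↔ x ∈ s := by
  simp [rankList]

theorem nodup_rankList : (rankList r s).Nodup :=
  (List.mergeSort_perm _ _).nodup_iff.2 s.nodup_toList

theorem pairwise_rankList (hr : Set.InjOn r s) : (rankList r s).Pairwise (r · < r ·) := by
  have hle := List.pairwise_mergeSort (le := fun x y => decide (r x ≤ r y))
    (fun a b c hab hbc => by simp only [decide_eq_true_eq] at *; exact hab.trans hbc)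
    (fun a b => by simpa using le_total (r a) (r b)) s.toList
  refine (hle.and nodup_rankList).imp_of_mem fun hx hy ⟨hxy, hne⟩ => ?_
  exact (of_decide_eq_true hxy).lt_of_ne fun h =>
    hne (hr (by simpa using hx) (by simpa using hy) h)

variable [DecidableEq α]

theorem pleLT_rankList_iff (hr : Set.InjOn r s) :
    pleLT (rankList r s) x y ↔ x ∈ s ∧ y ∈ s ∧ r x < r y := by
  simp only [pleLT, mem_rankList, and_congr_right_iff]
  intro hx hy
  have hl := pairwise_rankList hr
  constructor
  · intro h
    refine lt_of_not_ge fun hyx => ?_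
    rcases hyx.lt_or_eq with hyx | hyx
    · exact h.not_gt (List.idxOf_lt_idxOf_of_pairwise hl (by simpa) (by simpa) hyx hyx.not_gt)
    · exact h.ne (by rw [hr hx hy hyx.symm])
  · intro h
    exact List.idxOf_lt_idxOf_of_pairwise hl (by simpa) (by simpa) h h.not_gt

theorem pleLE_rankList_iff (hr : Set.InjOn r s) :
    pleLE (rankList r s) x y ↔ x ∈ s ∧ y ∈ s ∧ r x ≤ r y := by
  constructor
  · rintro ⟨hx, hy, h⟩
    simp only [mem_rankList] at hx hy
    exact ⟨hx, hy, not_lt.1 fun hyx => h.not_gt ((pleLT_rankList_iff hr).2 ⟨hy, hx, hyx⟩).2.2⟩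
  · rintro ⟨hx, hy, h⟩
    refine ⟨by simpa, by simpa, not_lt.1 fun hyx => h.not_gt ?_⟩
    exact ((pleLT_rankList_iff hr).1 ⟨by simpa, by simpa, hyx⟩).2.2

theorem isPLE_rankList [PartialOrder α] (hr : Set.InjOn r s) (hmono : StrictMonoOn r s) :
    IsPLE α (rankList r s) := by
  refine ⟨nodup_rankList, fun x hx y hy hxy => ?_⟩
  simp only [mem_rankList] at hx hy
  exact ((pleLT_rankList_iff hr).2 ⟨hx, hy, hmono hx hy hxy⟩).2.2

theorem pleLE_rankList_of_le [PartialOrder α] (hr : Set.InjOn r s) (hmono : StrictMonoOn r s)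
    (hx : x ∈ s) (hy : y ∈ s) (hxy : x ≤ y) : pleLE (rankList r s) x y :=
  (pleLE_rankList_iff hr).2 ⟨hx, hy, hmono.monotoneOn hx hy hxy⟩

end RankList

section Family

variable {α ι : Type*} [PartialOrder α] [DecidableEq α] [Fintype ι]

noncomputable def LocalWeight.ofFamily (L : ι → List α) (hL : Function.Injective L)
    (hple : ∀ i, IsPLE α (L i)) (c : ι → ℝ) (hc : ∀ i, c i ∈ Set.Icc 0 1) : LocalWeight α where
  w := Function.extend L c 0
  nonneg l := by
    by_cases h : ∃ i, L i = l
    · obtain ⟨i, rfl⟩ := h; rw [hL.extend_apply]; exact (hc i).1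
    · rw [Function.extend_apply' _ _ _ h]; rfl
  le_one l := by
    by_cases h : ∃ i, L i = l
    · obtain ⟨i, rfl⟩ := h; rw [hL.extend_apply]; exact (hc i).2
    · rw [Function.extend_apply' _ _ _ h]; exact zero_le_one
  supp l hl := Function.extend_apply' _ _ _ fun ⟨i, hi⟩ => hl (hi ▸ hple i)

theorem LocalWeight.finsum_ofFamily {L : ι → List α} (hL : Function.Injective L)
    (hple : ∀ i, IsPLE α (L i)) {c : ι → ℝ} (hc : ∀ i, c i ∈ Set.Icc 0 1)
    (p : List α → Prop) [DecidablePred p] :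
    ∑ᶠ l ∈ {l | IsPLE α l ∧ p l}, (ofFamily L hL hple c hc).w l = ∑ i with p (L i), c i := by
  classical
  have hsupp : Function.support ({l | IsPLE α l ∧ p l}.indicator (ofFamily L hL hple c hc).w)
      ⊆ ↑(univ.image L) := by
    intro l hl
    by_contra h
    refine hl (Set.indicator_apply_eq_zero.2 fun _ => Function.extend_apply' _ _ _ ?_)
    simpa using h
  rw [finsum_mem_def, finsum_eq_sum_of_support_subset _ hsupp, sum_image fun i _ j _ h => hL h,
    sum_filter]
  refine sum_congr rfl fun i _ => ?_
  simp only [Set.indicator, Set.mem_ofPred_eq, hple i, true_and, ofFamily, hL.extend_apply]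

theorem LocalWeight.sum_le_finsum_ofFamily {L : ι → List α} (hL : Function.Injective L)
    (hple : ∀ i, IsPLE α (L i)) {c : ι → ℝ} (hc : ∀ i, c i ∈ Set.Icc 0 1)
    {p : List α → Prop} {T : Finset ι} (hT : ∀ i ∈ T, p (L i)) :
    ∑ i ∈ T, c i ≤ ∑ᶠ l ∈ {l | IsPLE α l ∧ p l}, (ofFamily L hL hple c hc).w l := by
  classical
  rw [finsum_ofFamily]
  exact sum_le_sum_of_subset_of_nonneg (fun i hi => mem_filter.2 ⟨mem_univ i, hT i hi⟩)
    fun i _ _ => (hc i).1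

end Family

theorem fldim_le_maxLocalMeasure {α : Type*} [PartialOrder α] [DecidableEq α] [Fintype α]
    {W : LocalWeight α} (hW : IsFLRealizer W) : fldim α ≤ maxLocalMeasure W := by
  refine csInf_le ⟨0, ?_⟩ ⟨W, hW, rfl⟩
  rintro _ ⟨W', -, rfl⟩
  exact Real.iSup_nonneg fun u => finsum_nonneg fun l => finsum_nonneg fun _ => W'.nonneg l

theorem Nat.cast_sub_one_mul_inv {n : ℕ} (hn : 1 < n) : ((n : ℝ) - 1) * ((n : ℝ) - 1)⁻¹ = 1 :=
  mul_inv_cancel₀ (sub_pos.2 (by exact_mod_cast hn)).ne'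

namespace StdEx

variable {n : ℕ}

abbrev a (i : Fin n) : StdEx n := Sum.inl i
abbrev b (i : Fin n) : StdEx n := Sum.inr i

@[simp] theorem a_le_a {i j : Fin n} : a i ≤ a j ↔ i = j := Iff.rfl
@[simp] theorem a_le_b {i j : Fin n} : a i ≤ b j ↔ i ≠ j := Iff.rfl
@[simp] theorem b_le_b {i j : Fin n} : b i ≤ b j ↔ i = j := Iff.rfl
@[simp] theorem not_b_le_a {i j : Fin n} : ¬ b i ≤ a j := id

@[simp] theorem a_inj {i j : Fin n} : a i = a j ↔ i = j := Sum.inl_injective.eq_iff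
@[simp] theorem b_inj {i j : Fin n} : b i = b j ↔ i = j := Sum.inr_injective.eq_iff
@[simp] theorem a_ne_b {i j : Fin n} : a i ≠ b j := Sum.inl_ne_inr
@[simp] theorem b_ne_a {i j : Fin n} : b i ≠ a j := Sum.inr_ne_inl

theorem exists_eq_a_or_eq_b (x : StdEx n) : ∃ k, x = a k ∨ x = b k := by
  rcases x with k | k
  exacts [⟨k, .inl rfl⟩, ⟨k, .inr rfl⟩]

theorem exists_eq_a_eq_b_of_lt {x y : StdEx n} (h : x < y) :
    ∃ i j, i ≠ j ∧ x = a i ∧ y = b j := by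
  rw [lt_iff_le_not_ge] at h
  rcases x with i | i <;> rcases y with j | j <;>
    simp only [a_le_a, a_le_b, b_le_b, not_b_le_a, false_and] at h
  exacts [(h.2 h.1.symm).elim, ⟨i, j, h.1, rfl, rfl⟩, (h.2 h.1.symm).elim]

def descRank : StdEx n → ℤ
  | Sum.inl k => -k - n
  | Sum.inr k => -k

def splitRank (i : Fin n) : StdEx n → ℤ
  | Sum.inl k => if k = i then n + 1 else k
  | Sum.inr k => if k = i then n else n + 2 + k

theorem descRank_injective : Function.Injective (descRank (n := n)) := by
  rintro (i | i) (j | j) h <;> simp only [descRank] at h <;>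
    first | (congr 1; ext; omega) | omega

theorem splitRank_injective (i : Fin n) : Function.Injective (splitRank i) := by
  rintro (k | k) (l | l) h <;> simp only [splitRank] at h <;> split_ifs at h <;>
    first | (congr 1; ext; omega) | omega

theorem descRank_strictMono : StrictMono (descRank (n := n)) := by
  intro _ _ h
  obtain ⟨k, l, -, rfl, rfl⟩ := exists_eq_a_eq_b_of_lt h
  simp only [descRank]
  omega

theorem splitRank_strictMono (i : Fin n) : StrictMono (splitRank i) := by
  intro _ _ h
  obtain ⟨k, l, hkl, rfl, rfl⟩ := exists_eq_a_eq_b_of_lt h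
  simp only [splitRank]
  split_ifs <;> omega

/-- `a_{n-1} … a_0 b_{n-1} … b_0` -/
noncomputable def descList (n : ℕ) : List (StdEx n) := rankList descRank univ

/-- `b_i a_i` -/
noncomputable def swapList (i : Fin n) : List (StdEx n) := rankList (splitRank i) {a i, b i}

/-- `a_0 … â_i … a_{n-1} b_i a_i b_0 … b̂_i … b_{n-1}` -/
noncomputable def splitList (i : Fin n) : List (StdEx n) := rankList (splitRank i) univ

@[simp] theorem mem_descList (x : StdEx n) : x ∈ descList n := by simp [descList]

@[simp] theorem mem_splitList (i : Fin n) (x : StdEx n) : x ∈ splitList i := by simp [splitList]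

@[simp] theorem mem_swapList {i : Fin n} {x : StdEx n} : x ∈ swapList i ↔ x = a i ∨ x = b i := by
  simp [swapList]

@[simp] theorem pleLT_descList {x y : StdEx n} :
    pleLT (descList n) x y ↔ descRank x < descRank y := by
  simp [descList, pleLT_rankList_iff descRank_injective.injOn]

@[simp] theorem pleLT_splitList {i : Fin n} {x y : StdEx n} :
    pleLT (splitList i) x y ↔ splitRank i x < splitRank i y := by
  simp [splitList, pleLT_rankList_iff (splitRank_injective i).injOn]

@[simp] theorem pleLT_swapList {i : Fin n} {x y : StdEx n} :
    pleLT (swapList i) x y ↔ x = b i ∧ y = a i := by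
  rw [swapList, pleLT_rankList_iff (splitRank_injective i).injOn]
  simp only [Finset.mem_insert, Finset.mem_singleton]
  constructor
  · rintro ⟨rfl | rfl, rfl | rfl, h⟩ <;> simp_all [splitRank]
  · rintro ⟨rfl, rfl⟩; simp [splitRank]

theorem pleLE_descList_of_le {x y : StdEx n} (h : x ≤ y) : pleLE (descList n) x y :=
  pleLE_rankList_of_le descRank_injective.injOn (descRank_strictMono.strictMonoOn _)
    (mem_univ x) (mem_univ y) h

theorem pleLE_splitList_of_le {i : Fin n} {x y : StdEx n} (h : x ≤ y) :
    pleLE (splitList i) x y :=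
  pleLE_rankList_of_le (splitRank_injective i).injOn ((splitRank_strictMono i).strictMonoOn _)
    (mem_univ x) (mem_univ y) h

theorem swapList_ne_of_forall_mem (hn : 2 ≤ n) (i : Fin n) {l : List (StdEx n)}
    (hl : ∀ x, x ∈ l) : swapList i ≠ l := by
  obtain ⟨k, hk⟩ := Fintype.exists_ne_of_one_lt_card (by rw [Fintype.card_fin]; omega) i
  intro h
  have := hl (a k)
  rw [← h, mem_swapList] at this
  simp [hk] at this

theorem splitList_ne_descList (i : Fin n) : splitList i ≠ descList n := by
  intro h
  have := pleLT_splitList.2 (show splitRank i (b i) < splitRank i (a i) by simp [splitRank])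
  rw [h, pleLT_descList] at this
  simp only [descRank] at this
  omega

theorem swapList_injective : Function.Injective (swapList (n := n)) := by
  intro i j h
  have : a i ∈ swapList i := mem_swapList.2 (Or.inl rfl)
  rw [h, mem_swapList] at this
  simpa using this

theorem splitList_injective : Function.Injective (splitList (n := n)) := by
  intro i j h
  have := pleLT_splitList.2 (show splitRank i (b i) < splitRank i (a i) by simp [splitRank])
  rw [h, pleLT_splitList] at this
  simp only [splitRank] at this
  split_ifs at this with hij <;> first | exact hij.symm | omega

noncomputable def realizerList : Option (Fin n ⊕ Fin n) → List (StdEx n)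
  | none => descList n
  | some (Sum.inl i) => swapList i
  | some (Sum.inr i) => splitList i

theorem isPLE_realizerList : ∀ j, IsPLE (StdEx n) (realizerList j)
  | none => isPLE_rankList descRank_injective.injOn (descRank_strictMono.strictMonoOn _)
  | some (Sum.inl i) | some (Sum.inr i) =>
    isPLE_rankList (splitRank_injective i).injOn ((splitRank_strictMono i).strictMonoOn _)

theorem realizerList_injective (hn : 2 ≤ n) : Function.Injective (realizerList (n := n)) := by
  rintro (_ | i | i) (_ | j | j) h <;>
    simp only [realizerList, Option.some.injEq, Sum.inl.injEq, Sum.inr.injEq, reduceCtorEq] at h ⊢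
  · exact swapList_ne_of_forall_mem hn j mem_descList h.symm
  · exact splitList_ne_descList j h.symm
  · exact swapList_ne_of_forall_mem hn i mem_descList h
  · exact swapList_injective h
  · exact swapList_ne_of_forall_mem hn i (mem_splitList j) h
  · exact splitList_ne_descList i h
  · exact swapList_ne_of_forall_mem hn j (mem_splitList i) h.symm
  · exact splitList_injective h

noncomputable def realizerWeight (n : ℕ) : Option (Fin n ⊕ Fin n) → ℝ
  | some (Sum.inr _) => (n - 1 : ℝ)⁻¹
  | _ => 1 - (n - 1 : ℝ)⁻¹

theorem realizerWeight_mem_Icc (hn : 2 ≤ n) (j : Option (Fin n ⊕ Fin n)) :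
    realizerWeight n j ∈ Set.Icc 0 1 := by
  have h2 : (2 : ℝ) ≤ n := by exact_mod_cast hn
  have hq : 0 ≤ (n - 1 : ℝ)⁻¹ := inv_nonneg.2 (by linarith)
  have hq1 : (n - 1 : ℝ)⁻¹ ≤ 1 := inv_le_one_of_one_le₀ (by linarith)
  rcases j with _ | _ | _ <;> simp only [realizerWeight, Set.mem_Icc] <;> constructor <;> linarith

noncomputable def realizer (hn : 2 ≤ n) : LocalWeight (StdEx n) :=
  .ofFamily realizerList (realizerList_injective hn) isPLE_realizerList (realizerWeight n)
    (realizerWeight_mem_Icc hn)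

theorem localMeasure_realizer (hn : 2 ≤ n) (u : StdEx n) :
    localMeasure (realizer hn) u = 3 - (n - 1 : ℝ)⁻¹ := by
  rw [localMeasure, realizer, LocalWeight.finsum_ofFamily, sum_filter, Fintype.sum_option,
    Fintype.sum_sum_type]
  obtain ⟨k, rfl | rfl⟩ := exists_eq_a_or_eq_b u <;>
    simp only [realizerList, realizerWeight, mem_descList, mem_splitList, mem_swapList, a_inj,
      b_inj, a_ne_b, b_ne_a, or_false, false_or, ↓reduceIte, sum_ite_eq, mem_univ, sum_const,
      card_univ, Fintype.card_fin, nsmul_eq_mul] <;>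
    linear_combination Nat.cast_sub_one_mul_inv hn

theorem maxLocalMeasure_realizer (hn : 2 ≤ n) :
    maxLocalMeasure (realizer hn) = 3 - (n - 1 : ℝ)⁻¹ := by
  have : Nonempty (StdEx n) := ⟨a ⟨0, by omega⟩⟩
  simp only [maxLocalMeasure, localMeasure_realizer, ciSup_const]

section LowerBounds

variable (hn : 2 ≤ n) {p : List (StdEx n) → Prop}

theorem one_le_finsum_realizer_of_descList {i : Fin n} (hd : p (descList n))
    (hs : p (splitList i)) : 1 ≤ ∑ᶠ l ∈ {l | IsPLE (StdEx n) l ∧ p l}, (realizer hn).w l :=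
  calc (1 : ℝ) = ∑ j ∈ {none, some (Sum.inr i)}, realizerWeight n j := by simp [realizerWeight]
    _ ≤ _ := LocalWeight.sum_le_finsum_ofFamily _ _ _ (by simp [realizerList, hd, hs])

theorem one_le_finsum_realizer_of_swapList {i : Fin n} (hw : p (swapList i))
    (hs : p (splitList i)) : 1 ≤ ∑ᶠ l ∈ {l | IsPLE (StdEx n) l ∧ p l}, (realizer hn).w l :=
  calc (1 : ℝ) = ∑ j ∈ {some (Sum.inl i), some (Sum.inr i)}, realizerWeight n j := by
        simp [realizerWeight]
    _ ≤ _ := LocalWeight.sum_le_finsum_ofFamily _ _ _ (by simp [realizerList, hw, hs])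

theorem one_le_finsum_realizer_of_splitList_ne (k : Fin n) (hs : ∀ m, m ≠ k → p (splitList m)) :
    1 ≤ ∑ᶠ l ∈ {l | IsPLE (StdEx n) l ∧ p l}, (realizer hn).w l :=
  calc (1 : ℝ) = ∑ j ∈ (univ.erase k).image (some ∘ Sum.inr), realizerWeight n j := by
        rw [sum_image (by simp)]
        simp [realizerWeight, card_erase_of_mem, Nat.cast_sub (by omega : 1 ≤ n),
          Nat.cast_sub_one_mul_inv hn]
    _ ≤ _ := LocalWeight.sum_le_finsum_ofFamily _ _ _ (by simpa [realizerList] using hs)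

end LowerBounds

theorem isFLRealizer_realizer (hn : 2 ≤ n) : IsFLRealizer (realizer hn) := by
  obtain ⟨i⟩ : Nonempty (Fin n) := ⟨⟨0, by omega⟩⟩
  refine ⟨fun u v huv => one_le_finsum_realizer_of_descList hn (i := i)
    (pleLE_descList_of_le huv) (pleLE_splitList_of_le huv), fun u v huv hvu => ?_⟩
  obtain ⟨k, rfl | rfl⟩ := exists_eq_a_or_eq_b u <;>
    obtain ⟨l, rfl | rfl⟩ := exists_eq_a_or_eq_b v <;>
    simp only [a_le_a, a_le_b, b_le_b, not_b_le_a, ne_eq, Decidable.not_not, not_false_eq_true]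
      at huv hvu
  · rcases lt_or_gt_of_ne huv with h | h
    · refine one_le_finsum_realizer_of_descList hn (i := k) ?_ ?_ <;>
        simp only [pleLT_descList, pleLT_splitList, descRank, splitRank, ↓reduceIte] <;> omega
    · refine one_le_finsum_realizer_of_splitList_ne hn l fun m hm => ?_
      simp only [pleLT_splitList, splitRank]
      split_ifs <;> omega
  · subst huv
    exact one_le_finsum_realizer_of_swapList hn (i := k) (by simp) (by simp [splitRank])
  · subst hvu
    refine one_le_finsum_realizer_of_splitList_ne hn l fun m hm => ?_
    simp only [pleLT_splitList, splitRank]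
    split_ifs <;> omega
  · rcases lt_or_gt_of_ne huv with h | h
    · refine one_le_finsum_realizer_of_descList hn (i := l) ?_ ?_ <;>
        simp only [pleLT_descList, pleLT_splitList, descRank, splitRank, ↓reduceIte, huv] <;> omega
    · refine one_le_finsum_realizer_of_splitList_ne hn k fun m hm => ?_
      simp only [pleLT_splitList, splitRank]
      split_ifs <;> omega

end StdEx

/-- For every n ≥ 3, fldim(S_n) < 3. -/
theorem fldim_standard_example_lt_three (n : ℕ) (hn : 3 ≤ n) :
    fldim (StdEx n) < 3 := by
  have hn2 : 2 ≤ n := by omega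
  calc fldim (StdEx n) ≤ maxLocalMeasure (StdEx.realizer hn2) :=
        fldim_le_maxLocalMeasure (StdEx.isFLRealizer_realizer hn2)
    _ = 3 - (n - 1 : ℝ)⁻¹ := StdEx.maxLocalMeasure_realizer hn2
    _ < 3 := sub_lt_self 3 (inv_pos.2 (sub_pos.2 (by exact_mod_cast hn2)))
end

section
/- Let 2 ≤ d < n and let P = P(1,d;n). If w is a fractional local realizer of P and c = μ(P,w), then: Σ_{M ∈ ple(P)} a(M)·w(M) ≤ c·n, Σ_{M ∈ ple(P)} b(M)·w(M) ≤ c·C(n,d), Σ_{M ∈ ple(P)} r(M)·w(M) ≥ n·C(n−1,d), and Σ_{M ∈ ple(P)} q(M)·w(M) ≥ n·C(n,d). -/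
open scoped Classical

/-- a(M): number of minimal elements (singletons) of P(1,d;n) occurring in the ple M. -/
noncomputable def aCount (d n : ℕ) (l : List (PosetOneDN d n)) : ℕ :=
  (l.filter (fun S => S.val.card = 1)).length

/-- b(M): number of maximal elements (d-element sets) of P(1,d;n) occurring in M. -/
noncomputable def bCount (d n : ℕ) (l : List (PosetOneDN d n)) : ℕ :=
  (l.filter (fun S => S.val.card = d)).length

/-- r(M): number of pairs (u,S) with u a singleton, S a d-set, and u > S in M. -/
noncomputable def rCount (d n : ℕ) (l : List (PosetOneDN d n)) : ℕ :=
  ((Finset.univ ×ˢ Finset.univ).filter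
    (fun p : PosetOneDN d n × PosetOneDN d n =>
      p.1.val.card = 1 ∧ p.2.val.card = d ∧ pleLT l p.2 p.1)).card

/-- q(M): number of pairs (u,S) with u a singleton, S a d-set, and u < S in M. -/
noncomputable def qCount (d n : ℕ) (l : List (PosetOneDN d n)) : ℕ :=
  ((Finset.univ ×ˢ Finset.univ).filter
    (fun p : PosetOneDN d n × PosetOneDN d n =>
      p.1.val.card = 1 ∧ p.2.val.card = d ∧ pleLT l p.1 p.2)).card

/-! The upper bounds are double counting: `∑ a(M) w(M)` regroups as the sum of the local
measures `μ(u, w) ≤ c` over the `n` singletons `u`, and likewise for `b`. For the lower bounds,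
a singleton `u` and a `d`-set `S` (with `d ≥ 2`) never satisfy `S ≤ u`, so a fractional local
realizer puts `u` below `S` with total weight at least `1`, and puts `S` below `u` with total
weight at least `1` whenever `u ⊄ S`; summing over these pairs and exchanging the order of
summation gives `n * C(n, d)` and `n * C(n - 1, d)`. -/

open Finset

theorem sum_card_filter_mul_eq_sum_sum_filter {ι β : Type*} (I : Finset ι) (L : Finset β)
    (r : ι → β → Prop) [∀ i l, Decidable (r i l)] (f : β → ℝ) :
    ∑ l ∈ L, (#{i ∈ I | r i l} : ℝ) * f l = ∑ i ∈ I, ∑ l ∈ L with r i l, f l := by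
  simp_rw [natCast_card_filter, sum_mul, ite_mul, one_mul, zero_mul, sum_filter]
  exact sum_comm

theorem card_filter_product_eq_sum {ι κ : Type*} (s : Finset ι) (t : Finset κ) (p : ι → Prop)
    [DecidablePred p] (q : ι → κ → Prop) [∀ a b, Decidable (q a b)] :
    #{x ∈ s ×ˢ t | p x.1 ∧ q x.1 x.2} = ∑ a ∈ s with p a, #{b ∈ t | q a b} := by
  rw [card_filter, sum_product, sum_filter]
  refine sum_congr rfl fun a _ => ?_
  by_cases ha : p a
  · simp only [ha, true_and, if_true, card_filter]
  · simp [ha]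

section PartialLinearExtension

variable {α : Type*} [DecidableEq α]

theorem pleLE_iff_pleLT_of_ne {l : List α} {u v : α} (huv : u ≠ v) :
    pleLE l u v ↔ pleLT l u v :=
  ⟨fun ⟨hu, hv, h⟩ => ⟨hu, hv, h.lt_of_ne fun heq => huv ((List.idxOf_inj hu).mp heq)⟩,
    fun ⟨hu, hv, h⟩ => ⟨hu, hv, h.le⟩⟩

variable [PartialOrder α]

theorem IsFLRealizer.one_le_finsum_pleLT {W : LocalWeight α} (hW : IsFLRealizer W) {u v : α}
    (huv : u ≠ v) (hvu : ¬ v ≤ u) :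
    1 ≤ ∑ᶠ l ∈ {l : List α | IsPLE α l ∧ pleLT l u v}, W.w l := by
  by_cases h : u ≤ v
  · simpa only [pleLE_iff_pleLT_of_ne huv] using hW.1 u v h
  · exact hW.2 v u hvu h

variable (α) [Fintype α]

theorem isPLE_finite : {l : List α | IsPLE α l}.Finite :=
  (List.finite_length_le α (Fintype.card α)).subset fun _ hl => hl.1.length_le_card

noncomputable def pleFinset : Finset (List α) := (isPLE_finite α).toFinset

variable {α}

theorem finsum_mem_isPLE_and (p : List α → Prop) (f : List α → ℝ) :
    ∑ᶠ l ∈ {l : List α | IsPLE α l ∧ p l}, f l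
      = ∑ l ∈ pleFinset α with p l, f l := by
  rw [← finsum_mem_coe_finset]
  congr
  ext l
  simp [pleFinset]

theorem finsum_mem_isPLE (f : List α → ℝ) :
    ∑ᶠ l ∈ {l : List α | IsPLE α l}, f l = ∑ l ∈ pleFinset α, f l := by
  simpa using finsum_mem_isPLE_and (fun _ => True) f

theorem localMeasure_le_maxLocalMeasure (W : LocalWeight α) (u : α) :
    localMeasure W u ≤ maxLocalMeasure W :=
  le_ciSup (Finite.bddAbove_range _) u

theorem finsum_length_filter_mul_weight_le (W : LocalWeight α) (p : α → Prop)
    [DecidablePred p] :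
    ∑ᶠ l ∈ {l : List α | IsPLE α l},
        ((l.filter (fun u => decide (p u))).length : ℝ) * W.w l
      ≤ maxLocalMeasure W * #{u | p u} := by
  have hlen : ∀ l ∈ pleFinset α,
      (l.filter (fun u => decide (p u))).length = #{u ∈ {u | p u} | u ∈ l} := by
    intro l hl
    have hnd : l.Nodup := ((isPLE_finite α).mem_toFinset.mp hl).1
    rw [← List.toFinset_card_of_nodup (hnd.filter _), List.toFinset_filter]
    congr 1
    ext u
    simp [and_comm]
  rw [finsum_mem_isPLE, sum_congr rfl fun l hl => by rw [hlen l hl],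
    sum_card_filter_mul_eq_sum_sum_filter]
  calc ∑ u ∈ {u | p u}, ∑ l ∈ pleFinset α with u ∈ l, W.w l
      = ∑ u ∈ {u | p u}, localMeasure W u :=
        sum_congr rfl fun u _ => by rw [localMeasure, finsum_mem_isPLE_and]; congr
    _ ≤ ∑ _u ∈ {u | p u}, maxLocalMeasure W :=
        sum_le_sum fun u _ => localMeasure_le_maxLocalMeasure W u
    _ = _ := by rw [sum_const, nsmul_eq_mul, mul_comm]

theorem card_le_finsum_mul_weight (W : LocalWeight α) {ι : Type*} (I : Finset ι)
    (r : ι → List α → Prop) (count : List α → ℕ)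
    (hcount : ∀ l, #{i ∈ I | r i l} ≤ count l)
    (hI : ∀ i ∈ I, 1 ≤ ∑ᶠ l ∈ {l : List α | IsPLE α l ∧ r i l}, W.w l) :
    (#I : ℝ) ≤ ∑ᶠ l ∈ {l : List α | IsPLE α l}, (count l : ℝ) * W.w l := by
  rw [finsum_mem_isPLE]
  calc (#I : ℝ) = ∑ _i ∈ I, 1 := by simp
    _ ≤ ∑ i ∈ I, ∑ l ∈ pleFinset α with r i l, W.w l :=
        sum_le_sum fun i hi => finsum_mem_isPLE_and (r i) W.w ▸ hI i hi
    _ = ∑ l ∈ pleFinset α, (#{i ∈ I | r i l} : ℝ) * W.w l :=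
        (sum_card_filter_mul_eq_sum_sum_filter _ _ _ _).symm
    _ ≤ _ := sum_le_sum fun l _ =>
        mul_le_mul_of_nonneg_right (by exact_mod_cast hcount l) (W.nonneg l)

end PartialLinearExtension

namespace PosetOneDN

variable {d n : ℕ}

theorem not_le_of_card_eq (hd : 2 ≤ d) {u S : PosetOneDN d n} (hu : u.val.card = 1)
    (hS : S.val.card = d) : ¬ S ≤ u := fun h => by
  have := Finset.card_le_card (show S.val ⊆ u.val from h)
  omega

theorem card_filter_card_eq {k : ℕ} (hk : k = 1 ∨ k = d) :
    #{u : PosetOneDN d n | u.val.card = k} = n.choose k := by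
  have hmap : ({u | u.val.card = k} : Finset (PosetOneDN d n)).map (Function.Embedding.subtype _)
      = powersetCard k univ := by
    ext S
    rcases hk with rfl | rfl <;> simp +contextual [mem_powersetCard]
  rw [← card_map, hmap, card_powersetCard, card_univ, Fintype.card_fin]

theorem card_filter_not_le {u : PosetOneDN d n} (hu : u.val.card = 1) :
    #{S : PosetOneDN d n | S.val.card = d ∧ ¬ u ≤ S} = (n - 1).choose d := by
  obtain ⟨x, hx⟩ := Finset.card_eq_one.mp hu
  have hmap : ({S | S.val.card = d ∧ ¬ u ≤ S} : Finset (PosetOneDN d n)).map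
      (Function.Embedding.subtype _) = powersetCard d (univ.erase x) := by
    ext S
    simp +contextual [mem_powersetCard, ← Subtype.coe_le_coe, hx, subset_erase, and_comm]
  rw [← card_map, hmap, card_powersetCard, card_erase_of_mem (mem_univ x), card_univ,
    Fintype.card_fin]

theorem card_singleton_dset_pairs :
    #{x ∈ (univ ×ˢ univ : Finset (PosetOneDN d n × PosetOneDN d n)) |
        x.1.val.card = 1 ∧ x.2.val.card = d} = n * n.choose d := by
  rw [filter_product (fun u : PosetOneDN d n => u.val.card = 1)
      (fun S : PosetOneDN d n => S.val.card = d),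
    card_product, card_filter_card_eq (Or.inl rfl), card_filter_card_eq (Or.inr rfl),
    Nat.choose_one_right]

theorem card_singleton_dset_pairs_not_le :
    #{x ∈ (univ ×ˢ univ : Finset (PosetOneDN d n × PosetOneDN d n)) |
        x.1.val.card = 1 ∧ x.2.val.card = d ∧ ¬ x.1 ≤ x.2} = n * (n - 1).choose d := by
  rw [card_filter_product_eq_sum _ _ (fun u : PosetOneDN d n => u.val.card = 1)
      (fun u S : PosetOneDN d n => S.val.card = d ∧ ¬ u ≤ S),
    sum_congr rfl fun u hu => card_filter_not_le (mem_filter.mp hu).2,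
    sum_const, card_filter_card_eq (Or.inl rfl), Nat.choose_one_right, smul_eq_mul]

theorem finsum_aCount_mul_weight_le (W : LocalWeight (PosetOneDN d n)) :
    ∑ᶠ l ∈ {l | IsPLE (PosetOneDN d n) l}, (aCount d n l : ℝ) * W.w l
      ≤ maxLocalMeasure W * n := by
  calc _ ≤ _ := finsum_length_filter_mul_weight_le W fun u : PosetOneDN d n => u.val.card = 1
    _ = _ := by rw [card_filter_card_eq (Or.inl rfl), Nat.choose_one_right]

theorem finsum_bCount_mul_weight_le (W : LocalWeight (PosetOneDN d n)) :
    ∑ᶠ l ∈ {l | IsPLE (PosetOneDN d n) l}, (bCount d n l : ℝ) * W.w l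
      ≤ maxLocalMeasure W * n.choose d := by
  calc _ ≤ _ := finsum_length_filter_mul_weight_le W fun u : PosetOneDN d n => u.val.card = d
    _ = _ := by rw [card_filter_card_eq (Or.inr rfl)]

theorem le_finsum_rCount_mul_weight (hd : 2 ≤ d) {W : LocalWeight (PosetOneDN d n)}
    (hW : IsFLRealizer W) :
    (n : ℝ) * (n - 1).choose d
      ≤ ∑ᶠ l ∈ {l | IsPLE (PosetOneDN d n) l}, (rCount d n l : ℝ) * W.w l := by
  have := card_le_finsum_mul_weight W
    {x ∈ univ ×ˢ univ | x.1.val.card = 1 ∧ x.2.val.card = d ∧ ¬ x.1 ≤ x.2}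
    (fun x l => pleLT l x.2 x.1) (rCount d n)
    (fun l => card_le_card fun x hx => by simp_all) fun x hx => by
      obtain ⟨hu, hS, hnle⟩ := (mem_filter.mp hx).2
      exact hW.one_le_finsum_pleLT (fun h => not_le_of_card_eq hd hu hS (h ▸ le_rfl)) hnle
  rw [card_singleton_dset_pairs_not_le] at this
  exact_mod_cast this

theorem le_finsum_qCount_mul_weight (hd : 2 ≤ d) {W : LocalWeight (PosetOneDN d n)}
    (hW : IsFLRealizer W) :
    (n : ℝ) * n.choose d
      ≤ ∑ᶠ l ∈ {l | IsPLE (PosetOneDN d n) l}, (qCount d n l : ℝ) * W.w l := by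
  have := card_le_finsum_mul_weight W
    {x ∈ univ ×ˢ univ | x.1.val.card = 1 ∧ x.2.val.card = d}
    (fun x l => pleLT l x.1 x.2) (qCount d n)
    (fun l => card_le_card fun x hx => by simp_all) fun x hx => by
      obtain ⟨hu, hS⟩ := (mem_filter.mp hx).2
      exact hW.one_le_finsum_pleLT (fun h => not_le_of_card_eq hd hu hS (h ▸ le_rfl))
        (not_le_of_card_eq hd hu hS)
  rw [card_singleton_dset_pairs] at this
  exact_mod_cast this

end PosetOneDN

theorem lp_constraints_general (d n : ℕ) (hd : 2 ≤ d)
    (W : LocalWeight (PosetOneDN d n)) (hW : IsFLRealizer W)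
    (c : ℝ) (hc : c = maxLocalMeasure W) :
    (∑ᶠ l ∈ {l : List (PosetOneDN d n) | IsPLE (PosetOneDN d n) l},
        (aCount d n l : ℝ) * W.w l) ≤ c * n ∧
    (∑ᶠ l ∈ {l : List (PosetOneDN d n) | IsPLE (PosetOneDN d n) l},
        (bCount d n l : ℝ) * W.w l) ≤ c * (n.choose d) ∧
    (n : ℝ) * ((n - 1).choose d) ≤
      (∑ᶠ l ∈ {l : List (PosetOneDN d n) | IsPLE (PosetOneDN d n) l},
        (rCount d n l : ℝ) * W.w l) ∧
    (n : ℝ) * (n.choose d) ≤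
      (∑ᶠ l ∈ {l : List (PosetOneDN d n) | IsPLE (PosetOneDN d n) l},
        (qCount d n l : ℝ) * W.w l) := by
  subst hc
  exact ⟨PosetOneDN.finsum_aCount_mul_weight_le W, PosetOneDN.finsum_bCount_mul_weight_le W,
    PosetOneDN.le_finsum_rCount_mul_weight hd hW, PosetOneDN.le_finsum_qCount_mul_weight hd hW⟩

/-- Constraints A, B, R, Q hold for any fractional local realizer of
P(1,d;n) with cost c = μ(P,w). -/
theorem lp_constraints (d n : ℕ) (hd : 2 ≤ d) (hn : d < n)
    (W : LocalWeight (PosetOneDN d n)) (hW : IsFLRealizer W)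
    (c : ℝ) (hc : c = maxLocalMeasure W) :
    (∑ᶠ l ∈ {l : List (PosetOneDN d n) | IsPLE (PosetOneDN d n) l},
        (aCount d n l : ℝ) * W.w l) ≤ c * n ∧
    (∑ᶠ l ∈ {l : List (PosetOneDN d n) | IsPLE (PosetOneDN d n) l},
        (bCount d n l : ℝ) * W.w l) ≤ c * (n.choose d) ∧
    (n : ℝ) * ((n - 1).choose d) ≤
      (∑ᶠ l ∈ {l : List (PosetOneDN d n) | IsPLE (PosetOneDN d n) l},
        (rCount d n l : ℝ) * W.w l) ∧
    (n : ℝ) * (n.choose d) ≤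
      (∑ᶠ l ∈ {l : List (PosetOneDN d n) | IsPLE (PosetOneDN d n) l},
        (qCount d n l : ℝ) * W.w l) :=
  lp_constraints_general d n hd W hW c hc
end

section
/- Let 2 ≤ d < n, let 1 ≤ a ≤ n and 1 ≤ b ≤ C(n,d), and let M₁ ∈ ple(b,a) be a ple of P(1,d;n) that is not maximal-preserving. Then there exists M₂ ∈ ple(b,a) with q(M₂) = q(M₁) + 1. -/
open scoped Classical

/-!
If `q(M₁) < a·b`, some `d`-set of `M₁` precedes some singleton of `M₁`, hence somewhere in `M₁`
a `d`-set is immediately followed by a singleton. A `d`-set is never below a singleton, so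
transposing these two neighbours yields again a ple with the same members, and it reverses the
relative order of exactly this one (singleton, `d`-set) pair: `q` goes up by one.
-/

namespace List

variable {α : Type*} [DecidableEq α]

theorem idxOf_append_cons_left {A B : List α} {a : α} (ha : a ∉ A) :
    (A ++ a :: B).idxOf a = A.length := by
  simp [idxOf_append_of_notMem ha]

theorem idxOf_append_cons_cons_right {A B : List α} {a b : α} (hb : b ∉ A) (hab : a ≠ b) :
    (A ++ a :: b :: B).idxOf b = A.length + 1 := by
  simp [idxOf_append_of_notMem hb, idxOf_cons_ne _ hab]

theorem exists_eq_append_cons_cons_of_idxOf_lt (p : α → Prop) {l : List α}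
    {x y : α} (hy : y ∈ l) (hxy : l.idxOf x < l.idxOf y) (hx : ¬ p x) (hpy : p y) :
    ∃ A a b B, l = A ++ a :: b :: B ∧ ¬ p a ∧ p b := by
  by_contra! h
  -- without such a pair the transitive relation `p b → p a` holds along `l`
  let R : α → α → Prop := fun a b => p b → p a
  have : Trans R R R := ⟨fun hab hbc hc => hab (hbc hc)⟩
  have hchain : l.IsChain R := isChain_iff_forall_rel_of_append_cons_cons.mpr
    fun a b A B hl hb => by_contra fun ha => h A a b B hl ha hb
  have hy' := idxOf_lt_length_iff.mpr hy
  have hpair := pairwise_iff_getElem.mp hchain.pairwise _ _ (hxy.trans hy') hy' hxy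
  exact hx (by simpa using hpair (by simpa using hpy))

end List

section PleLT

variable {α : Type*} [DecidableEq α] {A B : List α} {a b u v : α}

theorem pleLT_or_pleLT_of_ne {l : List α} (hu : u ∈ l) (hv : v ∈ l) (huv : u ≠ v) :
    pleLT l u v ∨ pleLT l v u := by
  have : l.idxOf u ≠ l.idxOf v := fun h => huv ((List.idxOf_inj hu).mp h)
  rcases Nat.lt_or_gt_of_ne this with h | h
  · exact Or.inl ⟨hu, hv, h⟩
  · exact Or.inr ⟨hv, hu, h⟩

theorem not_pleLT_append_cons_cons (hl : (A ++ a :: b :: B).Nodup) :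
    ¬ pleLT (A ++ a :: b :: B) b a := by
  have hdisj := List.disjoint_of_nodup_append hl
  have hab : a ≠ b := by rintro rfl; exact (List.nodup_middle.mp hl).notMem (by simp)
  rintro ⟨-, -, h⟩
  rw [List.idxOf_append_cons_left fun h => hdisj h (by simp),
    List.idxOf_append_cons_cons_right (fun h => hdisj h (by simp)) hab] at h
  omega

theorem pleLT_append_cons_cons_swap_iff (hl : (A ++ a :: b :: B).Nodup) :
    pleLT (A ++ b :: a :: B) u v ↔
      pleLT (A ++ a :: b :: B) u v ∧ ¬(u = a ∧ v = b) ∨ u = b ∧ v = a := by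
  have hdisj := List.disjoint_of_nodup_append hl
  have haA : a ∉ A := fun h => hdisj h (by simp)
  have hbA : b ∉ A := fun h => hdisj h (by simp)
  have hab : a ≠ b := by rintro rfl; exact (List.nodup_middle.mp hl).notMem (by simp)
  set l := A ++ a :: b :: B
  set l' := A ++ b :: a :: B
  have hmem : ∀ z, z ∈ l' ↔ z ∈ l := fun z => ((List.Perm.swap a b B).append_left A).mem_iff
  have hla : l.idxOf a = A.length := List.idxOf_append_cons_left haA
  have hlb : l.idxOf b = A.length + 1 := List.idxOf_append_cons_cons_right hbA hab
  have hl'a : l'.idxOf a = A.length + 1 := List.idxOf_append_cons_cons_right haA hab.symm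
  have hl'b : l'.idxOf b = A.length := List.idxOf_append_cons_left hbA
  have hother : ∀ z, z ≠ a → z ≠ b → l'.idxOf z = l.idxOf z := by
    intro z hza hzb
    by_cases hz : z ∈ A
    · simp [l, l', List.idxOf_append_of_mem hz]
    · simp [l, l', List.idxOf_append_of_notMem hz, List.idxOf_cons_ne, hza.symm, hzb.symm]
  have hinj : ∀ z ∈ l, ∀ w, l.idxOf z = l.idxOf w → z = w := fun z hz w h =>
    (List.idxOf_inj hz).mp h
  unfold pleLT
  rw [hmem, hmem]
  by_cases hua : u = a <;> by_cases hub : u = b <;> by_cases hva : v = a <;>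
    by_cases hvb : v = b <;> subst_vars <;> grind

theorem IsPLE.swap_of_not_lt [PartialOrder α] (h : IsPLE α (A ++ a :: b :: B)) (hab : ¬ a < b) :
    IsPLE α (A ++ b :: a :: B) := by
  have hperm := (List.Perm.swap a b B).append_left A
  refine ⟨hperm.nodup_iff.mpr h.1, fun x hx y hy hxy => ?_⟩
  have hx' := hperm.mem_iff.mp hx
  have hy' := hperm.mem_iff.mp hy
  have hne : ¬(x = a ∧ y = b) := fun ⟨hxa, hyb⟩ => hab (hxa ▸ hyb ▸ hxy)
  exact ((pleLT_append_cons_cons_swap_iff h.1).mpr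
    (Or.inl ⟨⟨hx', hy', h.2 x hx' y hy' hxy⟩, hne⟩)).2.2

end PleLT

section PosetOneDN

variable {d n : ℕ}

theorem PosetOneDN.not_lt_of_card_eq {S u : PosetOneDN d n} (hd : d ≠ 0) (hS : S.val.card = d)
    (hu : u.val.card = 1) : ¬ S < u := fun h => by
  have := Finset.card_lt_card (show S.val ⊂ u.val from h)
  omega

def minMaxPairs (d n : ℕ) (l : List (PosetOneDN d n)) :
    Finset (PosetOneDN d n × PosetOneDN d n) :=
  (l.filter (fun S => S.val.card = 1)).toFinset ×ˢ (l.filter (fun S => S.val.card = d)).toFinset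

theorem card_minMaxPairs {l : List (PosetOneDN d n)} (hl : l.Nodup) :
    (minMaxPairs d n l).card = aCount d n l * bCount d n l := by
  rw [minMaxPairs, Finset.card_product, List.toFinset_card_of_nodup (hl.filter _),
    List.toFinset_card_of_nodup (hl.filter _)]
  rfl

theorem qCount_le_mul {l : List (PosetOneDN d n)} (hl : l.Nodup) :
    qCount d n l ≤ aCount d n l * bCount d n l := by
  rw [← card_minMaxPairs hl]
  refine Finset.card_le_card fun p hp => ?_
  obtain ⟨-, hu1, hSd, hu, hS, -⟩ := Finset.mem_filter.mp hp
  simp [minMaxPairs, hu1, hSd, hu, hS]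

theorem exists_pleLT_of_qCount_lt (hd : d ≠ 1) {l : List (PosetOneDN d n)} (hl : l.Nodup)
    (h : qCount d n l < aCount d n l * bCount d n l) :
    ∃ S u, S.val.card = d ∧ u.val.card = 1 ∧ pleLT l S u := by
  by_contra! hne
  refine (card_minMaxPairs hl ▸ h).not_ge (Finset.card_le_card fun p hp => ?_)
  simp only [minMaxPairs, Finset.mem_product, List.mem_toFinset, List.mem_filter,
    decide_eq_true_eq] at hp
  obtain ⟨⟨hu, hu1⟩, hS, hSd⟩ := hp
  have huS : p.1 ≠ p.2 := fun h => hd (hSd ▸ h ▸ hu1)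
  simp only [Finset.mem_filter, Finset.mem_product, Finset.mem_univ, true_and]
  exact ⟨hu1, hSd, (pleLT_or_pleLT_of_ne hu hS huS).resolve_right (hne _ _ hSd hu1)⟩

theorem aCount_perm {l l' : List (PosetOneDN d n)} (h : l.Perm l') :
    aCount d n l = aCount d n l' :=
  (h.filter _).length_eq

theorem bCount_perm {l l' : List (PosetOneDN d n)} (h : l.Perm l') :
    bCount d n l = bCount d n l' :=
  (h.filter _).length_eq

theorem qCount_append_cons_cons_swap (hd : d ≠ 1) {A B : List (PosetOneDN d n)}
    {S u : PosetOneDN d n} (hl : (A ++ S :: u :: B).Nodup) (hS : S.val.card = d)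
    (hu : u.val.card = 1) :
    qCount d n (A ++ u :: S :: B) = qCount d n (A ++ S :: u :: B) + 1 := by
  unfold qCount
  rw [← Finset.card_insert_of_notMem (a := (u, S)) (by simp [not_pleLT_append_cons_cons hl])]
  congr 1
  ext ⟨x, y⟩
  simp only [Finset.mem_filter, Finset.mem_product, Finset.mem_univ, true_and, Finset.mem_insert,
    Prod.mk.injEq, pleLT_append_cons_cons_swap_iff hl]
  have hxS : x.val.card = 1 → x ≠ S := fun hx h => hd (hS ▸ h ▸ hx)
  constructor
  · rintro ⟨hx, hy, ⟨hlt, -⟩ | hxy⟩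
    · exact Or.inr ⟨hx, hy, hlt⟩
    · exact Or.inl hxy
  · rintro (⟨rfl, rfl⟩ | ⟨hx, hy, hlt⟩)
    · exact ⟨hu, hS, Or.inr ⟨rfl, rfl⟩⟩
    · exact ⟨hx, hy, Or.inl ⟨hlt, fun h => hxS hx h.1⟩⟩

end PosetOneDN

theorem exists_q_add_one_general (d n : ℕ) (hd : 2 ≤ d)
    (a b : ℕ)
    (M₁ : List (PosetOneDN d n)) (hM₁ : IsPLE (PosetOneDN d n) M₁)
    (haM₁ : aCount d n M₁ = a) (hbM₁ : bCount d n M₁ = b)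
    (hnotmp : ∃ M' : List (PosetOneDN d n), IsPLE (PosetOneDN d n) M' ∧
      aCount d n M' = a ∧ bCount d n M' = b ∧ qCount d n M₁ < qCount d n M') :
    ∃ M₂ : List (PosetOneDN d n), IsPLE (PosetOneDN d n) M₂ ∧
      aCount d n M₂ = a ∧ bCount d n M₂ = b ∧
      qCount d n M₂ = qCount d n M₁ + 1 := by
  obtain ⟨M', hM', haM', hbM', hlt⟩ := hnotmp
  have hq : qCount d n M₁ < aCount d n M₁ * bCount d n M₁ := by
    rw [haM₁, hbM₁, ← haM', ← hbM']
    exact hlt.trans_le (qCount_le_mul hM'.1)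
  obtain ⟨S, u, hS, hu, hSu⟩ := exists_pleLT_of_qCount_lt (by omega) hM₁.1 hq
  obtain ⟨A, S', u', B, rfl, hS', hu'⟩ := List.exists_eq_append_cons_cons_of_idxOf_lt
    (fun z : PosetOneDN d n => z.val.card = 1) hSu.2.1 hSu.2.2 (by omega) hu
  have hS'd : S'.val.card = d := S'.prop.resolve_left hS'
  have hperm := (List.Perm.swap S' u' B).append_left A
  exact ⟨_, hM₁.swap_of_not_lt (PosetOneDN.not_lt_of_card_eq (by omega) hS'd hu'),
    (aCount_perm hperm).trans haM₁, (bCount_perm hperm).trans hbM₁,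
    qCount_append_cons_cons_swap (by omega) hM₁.1 hS'd hu'⟩

/-- If M₁ ∈ ple(b,a) is not maximal-preserving, then there is
M₂ ∈ ple(b,a) with q(M₂) = q(M₁) + 1. -/
theorem exists_q_add_one (d n : ℕ) (hd : 2 ≤ d) (hn : d < n)
    (a b : ℕ) (ha1 : 1 ≤ a) (han : a ≤ n) (hb1 : 1 ≤ b) (hbn : b ≤ n.choose d)
    (M₁ : List (PosetOneDN d n)) (hM₁ : IsPLE (PosetOneDN d n) M₁)
    (haM₁ : aCount d n M₁ = a) (hbM₁ : bCount d n M₁ = b)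
    (hnotmp : ∃ M' : List (PosetOneDN d n), IsPLE (PosetOneDN d n) M' ∧
      aCount d n M' = a ∧ bCount d n M' = b ∧ qCount d n M₁ < qCount d n M') :
    ∃ M₂ : List (PosetOneDN d n), IsPLE (PosetOneDN d n) M₂ ∧
      aCount d n M₂ = a ∧ bCount d n M₂ = b ∧
      qCount d n M₂ = qCount d n M₁ + 1 :=
  exists_q_add_one_general d n hd a b M₁ hM₁ haM₁ hbM₁ hnotmp
end

section
/- Fix an integer d ≥ 2 and a real ρ ≥ 0, and define r(x,y) = ((d+1)x − d·x^{(d+1)/d} − (1−y)^{d+1})/(d+1) and q(x,y) = xy − r(x,y). If (x₁,y₁) and (x₂,y₂) are points with 0 < x_i, y_i < 1 and y_i ≥ 1 − x_i^{1/d} for i = 1,2, both satisfying q(x_i,y_i) = ρ·r(x_i,y_i), and x₁ < x₂, then y₁ > y₂; that is, the ρ-ratio curve {(x,y) : q(x,y)/r(x,y) = ρ} is the graph of a strictly decreasing function of x. -/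
/-- Upper mean-value bound: `b^(n+1) - a^(n+1) ≤ (n+1) * b^n * (b-a)` for `0 ≤ a ≤ b`. -/
lemma pow_sub_pow_le_aux (a b : ℝ) (ha : 0 ≤ a) (hab : a ≤ b) :
    ∀ n : ℕ, b ^ (n+1) - a ^ (n+1) ≤ ((n:ℝ)+1) * b ^ n * (b - a) := by
  intro n
  induction n with
  | zero => simp
  | succ n ih =>
    have hb : 0 ≤ b := ha.trans hab
    have hle : a ^ (n+1) ≤ b ^ (n+1) := pow_le_pow_left₀ ha hab _
    have h2 : b * (b ^ (n+1) - a ^ (n+1)) ≤ b * (((n:ℝ)+1) * b ^ n * (b - a)) :=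
      mul_le_mul_of_nonneg_left ih hb
    have h3 : a ^ (n+1) * (b - a) ≤ b ^ (n+1) * (b - a) :=
      mul_le_mul_of_nonneg_right hle (sub_nonneg.mpr hab)
    calc b ^ (n+1+1) - a ^ (n+1+1)
        = b * (b ^ (n+1) - a ^ (n+1)) + a ^ (n+1) * (b - a) := by ring
      _ ≤ b * (((n:ℝ)+1) * b ^ n * (b - a)) + b ^ (n+1) * (b - a) := by linarith
      _ = ((n:ℝ)+1+1) * b ^ (n+1) * (b - a) := by push_cast; ring
      _ = ((((n:ℕ)+1 : ℕ):ℝ)+1) * b ^ (n+1) * (b - a) := by push_cast; ring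

/-- Lower mean-value bound: `(n+1) * a^n * (b-a) ≤ b^(n+1) - a^(n+1)` for `0 ≤ a ≤ b`. -/
lemma le_pow_sub_pow_aux (a b : ℝ) (ha : 0 ≤ a) (hab : a ≤ b) :
    ∀ n : ℕ, ((n:ℝ)+1) * a ^ n * (b - a) ≤ b ^ (n+1) - a ^ (n+1) := by
  intro n
  induction n with
  | zero => simp
  | succ n ih =>
    have hle : a ^ (n+1) ≤ b ^ (n+1) := pow_le_pow_left₀ ha hab _
    have h2 : a * (((n:ℝ)+1) * a ^ n * (b - a)) ≤ a * (b ^ (n+1) - a ^ (n+1)) :=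
      mul_le_mul_of_nonneg_left ih ha
    have h3 : a * (b ^ (n+1) - a ^ (n+1)) ≤ b * (b ^ (n+1) - a ^ (n+1)) :=
      mul_le_mul_of_nonneg_right hab (sub_nonneg.mpr hle)
    calc ((((n:ℕ)+1 : ℕ):ℝ)+1) * a ^ (n+1) * (b - a)
        = a * (((n:ℝ)+1) * a ^ n * (b - a)) + a ^ (n+1) * (b - a) := by push_cast; ring
      _ ≤ a * (b ^ (n+1) - a ^ (n+1)) + a ^ (n+1) * (b - a) := by linarith
      _ ≤ b * (b ^ (n+1) - a ^ (n+1)) + a ^ (n+1) * (b - a) := by linarith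
      _ = b ^ (n+1+1) - a ^ (n+1+1) := by ring

/-- Monotonicity of `g(t) = (d+1) t^d - d t^(d+1)` on `[0,1]`. -/
lemma g_mono_aux (d : ℕ) (hd : 2 ≤ d) (v u : ℝ) (hv : 0 ≤ v) (hvu : v ≤ u) (hu1 : u ≤ 1) :
    (d:ℝ) * (u ^ (d+1) - v ^ (d+1)) ≤ ((d:ℝ)+1) * (u ^ d - v ^ d) := by
  obtain ⟨k, rfl⟩ : ∃ k, d = k + 1 := ⟨d - 1, by omega⟩
  have hlow := le_pow_sub_pow_aux v u hv hvu k
  have hP : 0 ≤ u ^ (k+1) - v ^ (k+1) := sub_nonneg.mpr (pow_le_pow_left₀ hv hvu _)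
  have hvk : 0 ≤ v ^ k := pow_nonneg hv k
  have hv1 : v ≤ 1 := hvu.trans hu1
  have hk : (0:ℝ) ≤ (k:ℝ) := Nat.cast_nonneg k
  have f1 : 0 ≤ (u ^ (k+1) - v ^ (k+1)) * (1 - u) := mul_nonneg hP (sub_nonneg.mpr hu1)
  have f2 : 0 ≤ v ^ k * (u - v) * (1 - v) :=
    mul_nonneg (mul_nonneg hvk (sub_nonneg.mpr hvu)) (sub_nonneg.mpr hv1)
  have f3 : 0 ≤ (k:ℝ) * ((u ^ (k+1) - v ^ (k+1)) * (1 - u)) := mul_nonneg hk f1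
  have f4 : 0 ≤ (k:ℝ) * (v ^ k * (u - v) * (1 - v)) := mul_nonneg hk f2
  push_cast
  simp only [pow_succ] at *
  nlinarith [f1, f2, f3, f4, hlow]

/-- Strict monotonicity of `h(t) = d t^(d+1) - (d+1) a t^d` beyond `a`. -/
lemma h_strict_aux (d : ℕ) (hd : 2 ≤ d) (a b : ℝ) (ha : 0 < a) (hab : a < b) :
    0 < (d:ℝ) * (b ^ (d+1) - a ^ (d+1)) - ((d:ℝ)+1) * a * (b ^ d - a ^ d) := by
  obtain ⟨k, rfl⟩ : ∃ k, d = k + 2 := ⟨d - 2, by omega⟩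
  have hb : 0 < b := ha.trans hab
  have hup := pow_sub_pow_le_aux a b ha.le hab.le (k+1)
  have hpos : 0 < ((k:ℝ)+1+1) * b ^ (k+1) * (b - a) := by
    have h0 : (0:ℝ) < (k:ℝ)+1+1 := by positivity
    exact mul_pos (mul_pos h0 (pow_pos hb (k+1))) (sub_pos.mpr hab)
  have h1 : a * (b ^ (k+2) - a ^ (k+2)) ≤ a * (((k:ℝ)+1+1) * b ^ (k+1) * (b - a)) := by
    apply mul_le_mul_of_nonneg_left _ ha.le
    push_cast at hup ⊢
    convert hup using 2 <;> ring
  have h2 : a * (((k:ℝ)+1+1) * b ^ (k+1) * (b - a)) < b * (((k:ℝ)+1+1) * b ^ (k+1) * (b - a)) :=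
    mul_lt_mul_of_pos_right hab hpos
  have hk : (0:ℝ) ≤ (k:ℝ) := Nat.cast_nonneg k
  push_cast
  simp only [pow_succ] at *
  nlinarith [h1, h2]

/-- Facts at a single curve point. -/
lemma ratio_point_facts (d : ℕ) (hd : 2 ≤ d) (s u v : ℝ) (hs : 1 ≤ s)
    (hu : 0 < u) (hu1 : u < 1) (hv : 0 < v) (hvu : v ≤ u)
    (hE : ((d:ℝ)+1) * u ^ d * (1 - v)
        = s * (((d:ℝ)+1) * u ^ d - (d:ℝ) * u ^ (d+1) - v ^ (d+1))) :
    s * (1 - u) ≤ 1 - v ∧ s * v ^ d ≤ u ^ d := by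
  have hdpos : (0:ℝ) < (d:ℝ) := by exact_mod_cast (by omega : 0 < d)
  set A : ℝ := ((d:ℝ)+1) * u ^ d - (d:ℝ) * u ^ (d+1) - v ^ (d+1) with hA
  have hvle : v ^ (d+1) ≤ u ^ (d+1) := pow_le_pow_left₀ hv.le hvu _
  have hApos : 0 < A := by
    have h1 : 0 < u ^ d * (1 - u) := mul_pos (pow_pos hu d) (sub_pos.mpr hu1)
    have h2 : u ^ (d+1) = u ^ d * u := pow_succ u d
    nlinarith [mul_nonneg hdpos.le h1.le]
  constructor
  · -- s * (1-u) ≤ 1-v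
    have hkey : (1 - v) * A - s * (1 - u) * A = (1 - v) * (u ^ (d+1) - v ^ (d+1)) := by
      linear_combination (1 - u) * hE + (1 - v) * hA
    have hge : 0 ≤ (1 - v) * (u ^ (d+1) - v ^ (d+1)) :=
      mul_nonneg (by linarith [hvu.trans hu1.le]) (sub_nonneg.mpr hvle)
    have h3 : s * (1 - u) * A ≤ (1 - v) * A := by linarith
    exact le_of_mul_le_mul_right h3 hApos
  · -- s * v^d ≤ u^d
    have hg := g_mono_aux d hd v u hv.le hvu hu1.le
    have hkey : u ^ d * A - s * v ^ d * A
        = u ^ d * (((d:ℝ)+1) * (u ^ d - v ^ d) - (d:ℝ) * (u ^ (d+1) - v ^ (d+1))) := by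
      linear_combination v ^ d * hE + u ^ d * hA
    have hge : 0 ≤ u ^ d * (((d:ℝ)+1) * (u ^ d - v ^ d) - (d:ℝ) * (u ^ (d+1) - v ^ (d+1))) :=
      mul_nonneg (pow_pos hu d).le (by linarith)
    have h3 : s * v ^ d * A ≤ u ^ d * A := by linarith
    exact le_of_mul_le_mul_right h3 hApos

/-- Main comparison in (u,v)-coordinates. -/
lemma ratio_main_uv (d : ℕ) (hd : 2 ≤ d) (s : ℝ) (hs : 1 ≤ s)
    (u₁ v₁ u₂ v₂ : ℝ)
    (hu₁ : 0 < u₁) (hu₁1 : u₁ < 1) (hv₁ : 0 < v₁) (hv₁u : v₁ ≤ u₁)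
    (hu₂ : 0 < u₂) (hu₂1 : u₂ < 1) (hv₂ : 0 < v₂) (hv₂u : v₂ ≤ u₂)
    (hE₁ : ((d:ℝ)+1) * u₁ ^ d * (1 - v₁)
        = s * (((d:ℝ)+1) * u₁ ^ d - (d:ℝ) * u₁ ^ (d+1) - v₁ ^ (d+1)))
    (hE₂ : ((d:ℝ)+1) * u₂ ^ d * (1 - v₂)
        = s * (((d:ℝ)+1) * u₂ ^ d - (d:ℝ) * u₂ ^ (d+1) - v₂ ^ (d+1)))
    (hlt : u₁ < u₂) : v₁ < v₂ := by
  by_contra hcon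
  push_neg at hcon  -- v₂ ≤ v₁
  have hspos : 0 < s := lt_of_lt_of_le one_pos hs
  obtain ⟨hF1, hF2⟩ := ratio_point_facts d hd s u₁ v₁ hs hu₁ hu₁1 hv₁ hv₁u hE₁
  set Φ : ℝ := ((d:ℝ)+1) * u₂ ^ d * (1 - v₁)
      - s * (((d:ℝ)+1) * u₂ ^ d - (d:ℝ) * u₂ ^ (d+1) - v₁ ^ (d+1)) with hΦ
  have hdiff : 0 < u₂ ^ d - u₁ ^ d :=
    sub_pos.mpr (pow_lt_pow_left₀ hlt hu₁.le (by omega))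
  -- Step A : 0 < Φ
  have hstepA : 0 < Φ := by
    have heq : Φ = ((d:ℝ)+1) * (u₂ ^ d - u₁ ^ d) * (1 - v₁ - s)
        + s * (d:ℝ) * (u₂ ^ (d+1) - u₁ ^ (d+1)) := by
      linear_combination hΦ + hE₁
    have hm1 : ((d:ℝ)+1) * (u₂ ^ d - u₁ ^ d) * (-(s * u₁))
        ≤ ((d:ℝ)+1) * (u₂ ^ d - u₁ ^ d) * (1 - v₁ - s) := by
      apply mul_le_mul_of_nonneg_left (by linarith)
        (mul_nonneg (by positivity) hdiff.le)
    have hm2 : 0 < s * ((d:ℝ) * (u₂ ^ (d+1) - u₁ ^ (d+1))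
        - ((d:ℝ)+1) * u₁ * (u₂ ^ d - u₁ ^ d)) :=
      mul_pos hspos (h_strict_aux d hd u₁ u₂ hu₁ hlt)
    have e1 : u₁ ^ (d+1) = u₁ ^ d * u₁ := pow_succ u₁ d
    have e2 : u₂ ^ (d+1) = u₂ ^ d * u₂ := pow_succ u₂ d
    rw [heq, e1, e2]; rw [e1, e2] at hm2
    linarith [hm1, hm2]
  -- Step B : Φ ≤ 0
  have hstepB : Φ ≤ 0 := by
    have heq : Φ = s * (v₁ ^ (d+1) - v₂ ^ (d+1)) - ((d:ℝ)+1) * u₂ ^ d * (v₁ - v₂) := by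
      linear_combination hΦ + hE₂
    have hup := pow_sub_pow_le_aux v₂ v₁ hv₂.le hcon d
    have hm1 : s * (v₁ ^ (d+1) - v₂ ^ (d+1)) ≤ s * (((d:ℝ)+1) * v₁ ^ d * (v₁ - v₂)) :=
      mul_le_mul_of_nonneg_left hup hspos.le
    have hm2 : s * v₁ ^ d ≤ u₂ ^ d := le_trans hF2 (by linarith [hdiff])
    have hm3 : (s * v₁ ^ d) * (((d:ℝ)+1) * (v₁ - v₂)) ≤ u₂ ^ d * (((d:ℝ)+1) * (v₁ - v₂)) :=
      mul_le_mul_of_nonneg_right hm2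
        (mul_nonneg (by positivity) (sub_nonneg.mpr hcon))
    linarith [hm1, hm3, heq]
  linarith

/-- The ρ-ratio curve {(x,y) : q(x,y)/r(x,y) = ρ} is the graph of a
strictly decreasing function of x: if (x₁,y₁), (x₂,y₂) are on the curve with x₁ < x₂,
then y₁ > y₂. -/
theorem ratio_curve_decreasing (d : ℕ) (hd : 2 ≤ d) (ρ : ℝ) (hρ : 0 ≤ ρ)
    (r q : ℝ → ℝ → ℝ)
    (hr : ∀ x y : ℝ, r x y =
      (((d : ℝ) + 1) * x - (d : ℝ) * x ^ (((d : ℝ) + 1) / (d : ℝ)) - (1 - y) ^ (d + 1))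
        / ((d : ℝ) + 1))
    (hq : ∀ x y : ℝ, q x y = x * y - r x y)
    (x₁ y₁ x₂ y₂ : ℝ)
    (hx₁ : 0 < x₁) (hx₁' : x₁ < 1) (hy₁ : 0 < y₁) (hy₁' : y₁ < 1)
    (hd₁ : 1 - x₁ ^ ((1 : ℝ) / (d : ℝ)) ≤ y₁)
    (hx₂ : 0 < x₂) (hx₂' : x₂ < 1) (hy₂ : 0 < y₂) (hy₂' : y₂ < 1)
    (hd₂ : 1 - x₂ ^ ((1 : ℝ) / (d : ℝ)) ≤ y₂)
    (hc₁ : q x₁ y₁ = ρ * r x₁ y₁) (hc₂ : q x₂ y₂ = ρ * r x₂ y₂)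
    (hlt : x₁ < x₂) :
    y₂ < y₁ := by
  have hdR : (0:ℝ) < (d:ℝ) := by exact_mod_cast (by omega : 0 < d)
  have hdne : (d:ℝ) ≠ 0 := ne_of_gt hdR
  have hd1ne : ((d:ℝ)+1) ≠ 0 := by positivity
  have hexp : (0:ℝ) < 1 / (d:ℝ) := by positivity
  -- u-coordinates
  have key : ∀ x y : ℝ, 0 < x → x < 1 → 0 < y → y < 1 →
      1 - x ^ ((1:ℝ)/(d:ℝ)) ≤ y → q x y = ρ * r x y →
      (0 < x ^ ((1:ℝ)/(d:ℝ)) ∧ x ^ ((1:ℝ)/(d:ℝ)) < 1 ∧ (1 - y) ≤ x ^ ((1:ℝ)/(d:ℝ)) ∧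
        ((d:ℝ)+1) * (x ^ ((1:ℝ)/(d:ℝ))) ^ d * (1 - (1 - y))
          = (ρ+1) * (((d:ℝ)+1) * (x ^ ((1:ℝ)/(d:ℝ))) ^ d
              - (d:ℝ) * (x ^ ((1:ℝ)/(d:ℝ))) ^ (d+1) - (1 - y) ^ (d+1))) := by
    intro x y hx hx1 hy hy1 hdy hc
    have hu : 0 < x ^ ((1:ℝ)/(d:ℝ)) := Real.rpow_pos_of_pos hx _
    have hu1 : x ^ ((1:ℝ)/(d:ℝ)) < 1 := Real.rpow_lt_one hx.le hx1 hexp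
    refine ⟨hu, hu1, by linarith, ?_⟩
    have hud : (x ^ ((1:ℝ)/(d:ℝ))) ^ d = x := by
      rw [← Real.rpow_natCast (x ^ ((1:ℝ)/(d:ℝ))) d, ← Real.rpow_mul hx.le]
      rw [one_div_mul_cancel hdne, Real.rpow_one]
    have hud1 : (x ^ ((1:ℝ)/(d:ℝ))) ^ (d+1) = x ^ (((d:ℝ)+1)/(d:ℝ)) := by
      rw [← Real.rpow_natCast (x ^ ((1:ℝ)/(d:ℝ))) (d+1), ← Real.rpow_mul hx.le]
      push_cast
      ring_nf
    rw [hud, hud1]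
    -- from the curve condition
    have h1 : x * y = (ρ + 1) * r x y := by
      have := hc
      rw [hq] at this
      linarith
    rw [hr, ← mul_div_assoc, eq_div_iff hd1ne] at h1
    linear_combination h1
  obtain ⟨hu₁p, hu₁1, hv₁u, hE₁⟩ := key x₁ y₁ hx₁ hx₁' hy₁ hy₁' hd₁ hc₁
  obtain ⟨hu₂p, hu₂1, hv₂u, hE₂⟩ := key x₂ y₂ hx₂ hx₂' hy₂ hy₂' hd₂ hc₂
  have hultu : x₁ ^ ((1:ℝ)/(d:ℝ)) < x₂ ^ ((1:ℝ)/(d:ℝ)) :=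
    Real.rpow_lt_rpow hx₁.le hlt hexp
  have := ratio_main_uv d hd (ρ+1) (by linarith)
    (x₁ ^ ((1:ℝ)/(d:ℝ))) (1 - y₁) (x₂ ^ ((1:ℝ)/(d:ℝ))) (1 - y₂)
    hu₁p hu₁1 (by linarith) hv₁u hu₂p hu₂1 (by linarith) hv₂u hE₁ hE₂ hultu
  linarith
end
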